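/- Under Assumptions (A1) and (A2), fix y_t ∈ Y, a vector g̃_t with ‖g̃_t‖ ≤ G̃_F, and let y_{t+1} = argmin_{y∈Y} { ⟨g̃_t, y − y_t⟩ + (1/η) D_R(y‖y_t) }. Define ε_t^{OMD}(y) = (1/η)( D_R(y‖y_t) − (1/2)(y − y_t)ᵀ∇²R(y_t)(y − y_t) ). Then ‖∇ε_t^{OMD}(y_{t+1})‖ ≤ 2 G G̃_F² η. -/

import Mathlib

open scoped RealInnerProductSpace

/-- Bregman divergence `D_R(x ‖ y) = R x - R y - ⟪∇R y, x - y⟫`. -/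
noncomputable def bregman {E : Type*} [NormedAddCommGroup E] [InnerProductSpace ℝ E]
    [CompleteSpace E] (R : E → ℝ) (x y : E) : ℝ :=
  R x - R y - ⟪gradient R y, x - y⟫

/-!
The step `v = y_{t+1} - y_t` is short: comparing the objective at `y_{t+1}` with its value `0`
at `y_t` and using strong convexity gives `½‖v‖² ≤ η ‖g̃_t‖ ‖v‖`. The gradient of `ε_t^{OMD}` at
`y_{t+1}` is `1/η` times the first-order Taylor remainder of `∇R` at `y_t`, and since `∇²R` is
`G`-Lipschitz (its derivative is bounded by `G`) that remainder is at most `G/2 ‖v‖²`.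
-/

open Set

section Taylor

variable {E F : Type*} [NormedAddCommGroup E] [NormedSpace ℝ E]
  [NormedAddCommGroup F] [NormedSpace ℝ F]

theorem norm_sub_le_half_of_norm_deriv_le_mul {f f' : ℝ → F} {C : ℝ}
    (hf : ∀ t ∈ Icc (0 : ℝ) 1, HasDerivAt f (f' t) t)
    (hf' : ∀ t ∈ Ico (0 : ℝ) 1, ‖f' t‖ ≤ C * t) :
    ‖f 1 - f 0‖ ≤ C / 2 := by
  have hB : ∀ t : ℝ, HasDerivAt (fun t => C * t ^ 2 / 2) (C * t) t := fun t =>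
    (((hasDerivAt_pow 2 t).const_mul C).div_const 2).congr_deriv (by ring)
  have := image_norm_le_of_norm_deriv_right_le_deriv_boundary (f := fun t => f t - f 0)
    (fun t ht => ((hf t ht).sub_const _).continuousAt.continuousWithinAt)
    (fun t ht => ((hf t (Ico_subset_Icc_self ht)).sub_const _).hasDerivWithinAt)
    (by simp) hB hf' (right_mem_Icc.2 zero_le_one)
  simpa using this

theorem Convex.norm_taylor_remainder_le {s : Set E} (hs : Convex ℝ s) {f : E → F}
    {f' : E → E →L[ℝ] F} (hf : ∀ z ∈ s, HasFDerivAt f (f' z) z) {C : ℝ} {a b : E}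
    (ha : a ∈ s) (hb : b ∈ s) (hf'_lip : ∀ z ∈ s, ‖f' z - f' a‖ ≤ C * ‖z - a‖) :
    ‖f b - f a - f' a (b - a)‖ ≤ C / 2 * ‖b - a‖ ^ 2 := by
  set v := b - a
  have hmem : ∀ t ∈ Icc (0 : ℝ) 1, a + t • v ∈ s := fun t ht => hs.add_smul_sub_mem ha hb ht
  have hderiv : ∀ t ∈ Icc (0 : ℝ) 1, HasDerivAt (fun t : ℝ => f (a + t • v) - t • f' a v)
      (f' (a + t • v) v - f' a v) t := by
    intro t ht
    have hline : HasDerivAt (fun t : ℝ => a + t • v) v t := by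
      simpa using ((hasDerivAt_id t).smul_const v).const_add a
    exact ((hf _ (hmem t ht)).comp_hasDerivAt t hline).sub
      (by simpa using (hasDerivAt_id t).smul_const (f' a v))
  have hbound : ∀ t ∈ Ico (0 : ℝ) 1, ‖f' (a + t • v) v - f' a v‖ ≤ C * ‖v‖ ^ 2 * t := by
    intro t ht
    have hlip := hf'_lip _ (hmem t (Ico_subset_Icc_self ht))
    rw [add_sub_cancel_left, norm_smul, Real.norm_of_nonneg ht.1] at hlip
    calc ‖f' (a + t • v) v - f' a v‖ ≤ ‖f' (a + t • v) - f' a‖ * ‖v‖ :=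
          (f' (a + t • v) - f' a).le_opNorm v
      _ ≤ C * (t * ‖v‖) * ‖v‖ := by gcongr
      _ = C * ‖v‖ ^ 2 * t := by ring
  have := norm_sub_le_half_of_norm_deriv_le_mul hderiv hbound
  simp only [one_smul, zero_smul, add_zero, sub_zero] at this
  rw [show a + v = b from add_sub_cancel a b] at this
  calc ‖f b - f a - f' a v‖ = ‖f b - f' a v - f a‖ := by rw [sub_right_comm]
    _ ≤ C * ‖v‖ ^ 2 / 2 := this
    _ = C / 2 * ‖v‖ ^ 2 := by ring

end Taylor

section MirrorDescent

variable {E : Type*} [NormedAddCommGroup E] [InnerProductSpace ℝ E] [CompleteSpace E]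

theorem norm_sub_le_of_isMinOn_inner_add_bregman {R : E → ℝ} {Y : Set E} {g y₀ y₁ : E}
    {η : ℝ} (hη : 0 < η) (hy₀ : y₀ ∈ Y) (hsc : 1 / 2 * ‖y₁ - y₀‖ ^ 2 ≤ bregman R y₁ y₀)
    (hmin : IsMinOn (fun y => ⟪g, y - y₀⟫ + (1 / η) * bregman R y y₀) Y y₁) :
    ‖y₁ - y₀‖ ≤ 2 * η * ‖g‖ := by
  have hle_zero : ⟪g, y₁ - y₀⟫ + (1 / η) * bregman R y₁ y₀ ≤ 0 := by
    simpa [bregman] using hmin hy₀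
  have hcs : -⟪g, y₁ - y₀⟫ ≤ ‖g‖ * ‖y₁ - y₀‖ := (neg_le_abs _).trans (abs_real_inner_le_norm _ _)
  have hquad : 1 / 2 * ‖y₁ - y₀‖ ^ 2 ≤ η * ‖g‖ * ‖y₁ - y₀‖ := by
    have : bregman R y₁ y₀ ≤ η * -⟪g, y₁ - y₀⟫ := by
      rw [← div_le_iff₀' hη, div_eq_inv_mul, ← one_div]; linarith
    nlinarith
  by_contra! hlong
  have hpos : 0 < ‖y₁ - y₀‖ := lt_of_le_of_lt (by positivity) hlong
  nlinarith [mul_lt_mul_of_pos_right hlong hpos]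

end MirrorDescent

theorem norm_grad_eps_omd_general
    {d : ℕ} (Y : Set (EuclideanSpace ℝ (Fin d)))
    (hYcv : Convex ℝ Y)
    (R : EuclideanSpace ℝ (Fin d) → ℝ)
    (HR : EuclideanSpace ℝ (Fin d) →
      EuclideanSpace ℝ (Fin d) →L[ℝ] EuclideanSpace ℝ (Fin d))
    (hHR : ∀ z ∈ Y, HasFDerivAt (gradient R) (HR z) z)
    (G : ℝ)
    (hRsc : ∀ x ∈ Y, ∀ y ∈ Y, (1 / 2) * ‖x - y‖ ^ 2 ≤ bregman R x y)
    (T3 : EuclideanSpace ℝ (Fin d) →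
      EuclideanSpace ℝ (Fin d) →L[ℝ] EuclideanSpace ℝ (Fin d) →L[ℝ] EuclideanSpace ℝ (Fin d))
    (hT3 : ∀ z ∈ Y, HasFDerivAt HR (T3 z) z) (hT3bd : ∀ z ∈ Y, ‖T3 z‖ ≤ G)
    (η GtF : ℝ) (hη : 0 < η)
    (yt : EuclideanSpace ℝ (Fin d)) (hyt : yt ∈ Y)
    (gtil : EuclideanSpace ℝ (Fin d)) (hgtil : ‖gtil‖ ≤ GtF)
    (yt1 : EuclideanSpace ℝ (Fin d)) (hyt1mem : yt1 ∈ Y)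
    (hyt1 : IsMinOn (fun y => ⟪gtil, y - yt⟫ + (1 / η) * bregman R y yt) Y yt1) :
    ‖(1 / η) • (gradient R yt1 - gradient R yt - HR yt (yt1 - yt))‖ ≤ 2 * G * GtF ^ 2 * η := by
  have hG : 0 ≤ G := (norm_nonneg (T3 yt)).trans (hT3bd yt hyt)
  have hstep : ‖yt1 - yt‖ ≤ 2 * η * GtF :=
    (norm_sub_le_of_isMinOn_inner_add_bregman hη hyt (hRsc yt1 hyt1mem yt hyt) hyt1).trans
      (by gcongr)
  have hHR_lip : ∀ z ∈ Y, ‖HR z - HR yt‖ ≤ G * ‖z - yt‖ := fun z hz =>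
    hYcv.norm_image_sub_le_of_norm_hasFDerivWithin_le
      (fun w hw => (hT3 w hw).hasFDerivWithinAt) hT3bd hyt hz
  have htaylor := hYcv.norm_taylor_remainder_le hHR hyt hyt1mem hHR_lip
  rw [norm_smul, Real.norm_of_nonneg (by positivity)]
  calc 1 / η * ‖gradient R yt1 - gradient R yt - HR yt (yt1 - yt)‖
      ≤ 1 / η * (G / 2 * (2 * η * GtF) ^ 2) := by
        gcongr
        exact htaylor.trans (by gcongr)
    _ = 2 * G * GtF ^ 2 * η := by field_simp

/-- bound on the gradient of the OMD Taylor-remainder perturbation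
`ε_t^{OMD}(y) = (1/η)(D_R(y‖y_t) - ½ (y-y_t)ᵀ∇²R(y_t)(y-y_t))` at the mirror-descent iterate,
where `∇ε_t^{OMD}(y) = (1/η)(∇R(y) - ∇R(y_t) - ∇²R(y_t)(y - y_t))`. -/
theorem norm_grad_eps_omd
    {d : ℕ} (Y : Set (EuclideanSpace ℝ (Fin d)))
    (hYne : Y.Nonempty) (hYcv : Convex ℝ Y) (hYcp : IsCompact Y)
    (R : EuclideanSpace ℝ (Fin d) → ℝ)
    (HR : EuclideanSpace ℝ (Fin d) →
      EuclideanSpace ℝ (Fin d) →L[ℝ] EuclideanSpace ℝ (Fin d))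
    (hHR : ∀ z ∈ Y, HasFDerivAt (gradient R) (HR z) z)
    (G : ℝ) (hG : 1 < G)
    (hRsc : ∀ x ∈ Y, ∀ y ∈ Y, (1 / 2) * ‖x - y‖ ^ 2 ≤ bregman R x y)
    (hgradRbd : ∀ z ∈ Y, ‖gradient R z‖ ≤ G)
    (T3 : EuclideanSpace ℝ (Fin d) →
      EuclideanSpace ℝ (Fin d) →L[ℝ] EuclideanSpace ℝ (Fin d) →L[ℝ] EuclideanSpace ℝ (Fin d))
    (hT3 : ∀ z ∈ Y, HasFDerivAt HR (T3 z) z) (hT3bd : ∀ z ∈ Y, ‖T3 z‖ ≤ G)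
    (η GtF : ℝ) (hη : 0 < η) (hGtF : 0 < GtF)
    (yt : EuclideanSpace ℝ (Fin d)) (hyt : yt ∈ Y)
    (gtil : EuclideanSpace ℝ (Fin d)) (hgtil : ‖gtil‖ ≤ GtF)
    (yt1 : EuclideanSpace ℝ (Fin d)) (hyt1mem : yt1 ∈ Y)
    (hyt1 : IsMinOn (fun y => ⟪gtil, y - yt⟫ + (1 / η) * bregman R y yt) Y yt1) :
    ‖(1 / η) • (gradient R yt1 - gradient R yt - HR yt (yt1 - yt))‖ ≤ 2 * G * GtF ^ 2 * η :=
  norm_grad_eps_omd_general Y hYcv R HR hHR G hRsc T3 hT3 hT3bd η GtF hη yt hyt gtil hgtil yt1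
    hyt1mem hyt1
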